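/- arXiv:0911.4076 — 2 statements merged into one kernel-verified Lean document; each statement's English description precedes it below -/
import Mathlib

section
/- At the point (α₀, 0), where α₀ = log(π/(1−π)), the partial derivatives of the expected negative logistic log-likelihood satisfy d₁₀(α₀, 0) = 0 and d₀₁(α₀, 0) = −π(1−π)μ, where d₁₀(α,β) = 1 − π − π·E[(1 + exp(α + βμ + βZ))⁻¹] − (1 − π)·E[(1 + exp(α + βZ))⁻¹] and d₀₁(α,β) = −π·E[(μ + Z)·(1 + exp(α + βμ + βZ))⁻¹] − (1 − π)·E[Z·(1 + exp(α + βZ))⁻¹]. -/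
open MeasureTheory Real

/-!
At `β = 0` both logistic factors are the constant `(1 + exp α₀)⁻¹ = 1 - π`, so the two
expectations reduce to `E[1] = 1`, `E[μ + Z] = μ` and `E[Z] = 0`.
-/

theorem MeasureTheory.Integrable.of_integrable_even_pow {α : Type*} [MeasurableSpace α]
    {ν : Measure α} [IsFiniteMeasure ν] {f : α → ℝ} (hf : AEStronglyMeasurable f ν)
    {n : ℕ} (hn : Even n) (hn0 : n ≠ 0) (hint : Integrable (fun x => f x ^ n) ν) :
    Integrable f ν := by
  have hnorm : Integrable (fun x => ‖f x‖ ^ n) ν := by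
    simpa only [Real.norm_eq_abs, hn.pow_abs] using hint
  have := integrable_norm_pow_of_le hf (Nat.one_le_iff_ne_zero.mpr hn0) hnorm
  exact (integrable_norm_iff hf).mp (by simpa only [pow_one] using this)

theorem Real.inv_one_add_exp_log_odds {p : ℝ} (hp0 : 0 < p) (hp1 : p < 1) :
    (1 + exp (log (p / (1 - p))))⁻¹ = 1 - p := by
  have h1p : 0 < 1 - p := sub_pos.mpr hp1
  rw [exp_log (div_pos hp0 h1p)]
  field_simp
  ring

/-- At `(α₀, 0)` with `α₀ = log(π/(1−π))`, the partial derivatives of the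
expected negative logistic log-likelihood satisfy `d₁₀(α₀,0) = 0` and
`d₀₁(α₀,0) = −π(1−π)μ`. -/
theorem expected_loglik_derivs_at_alpha0
    {Ω : Type*} [MeasurableSpace Ω] (P : Measure Ω) [IsProbabilityMeasure P]
    (Z : Ω → ℝ) (hZmeas : Measurable Z)
    (hZmom : Integrable (fun ω => (Z ω) ^ 4) P)
    (hZmean : ∫ ω, Z ω ∂P = 0)
    (p : ℝ) (hp : p ∈ Set.Ioo (0 : ℝ) 1) (μ : ℝ)
    (α₀ : ℝ) (hα₀ : α₀ = Real.log (p / (1 - p))) :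
    (1 - p
        - p * ∫ ω, (1 + Real.exp (α₀ + 0 * μ + 0 * Z ω))⁻¹ ∂P
        - (1 - p) * ∫ ω, (1 + Real.exp (α₀ + 0 * Z ω))⁻¹ ∂P) = 0
      ∧
    (-p * ∫ ω, (μ + Z ω) * (1 + Real.exp (α₀ + 0 * μ + 0 * Z ω))⁻¹ ∂P
        - (1 - p) * ∫ ω, Z ω * (1 + Real.exp (α₀ + 0 * Z ω))⁻¹ ∂P)
      = -p * (1 - p) * μ := by
  have hZint : Integrable Z P :=
    hZmom.of_integrable_even_pow hZmeas.aestronglyMeasurable (by decide) (by norm_num)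
  have hmean_shift : ∫ ω, (μ + Z ω) ∂P = μ := by
    rw [integral_add (integrable_const μ) hZint, hZmean, integral_const, probReal_univ,
      one_smul, add_zero]
  simp only [zero_mul, add_zero, hα₀, inv_one_add_exp_log_odds hp.1 hp.2, integral_const,
    probReal_univ, one_smul, integral_mul_const, hmean_shift, hZmean]
  constructor <;> ring
end

section
/- For every C > 0 there exist constants K > 0 and β₀ ∈ (0,1] such that for all α, μ with |α| ≤ C, |μ| ≤ C and all β with |β| ≤ β₀, writing ρ = e^α/(1 + e^α), one has |E[(1 + exp(α + β(μ + Z)))⁻¹] − (1 − ρ)·{1 − ρβμ + ρ(ρ − ½)β²(μ² + E(Z²))}| ≤ K|β|³. -/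
/-! The integrand is `σ(-α - βW)`, with `σ` the sigmoid and `W = μ + Z`. From `σ' = σ(1 - σ)`
one gets `σ'' = σ(1 - σ)(1 - 2σ)` and `|σ'''| ≤ 1/8`, so the second-order Taylor remainder of
`σ` at `-α` is at most `|βW|³/8` pointwise. Taking expectations, `E W = μ` and
`E W² = μ² + E Z²` produce the quadratic expansion, and `E|W|³ ≤ 4(|μ|³ + 1 + E Z⁴)` bounds the
error uniformly, with `K = (C³ + 1 + E Z⁴)/2` and `β₀ = 1`. -/

open MeasureTheory Real

theorem abs_sub_le_mul_abs_sub_pow_succ {F F' : ℝ → ℝ} (hF : ∀ x, HasDerivAt F (F' x) x)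
    {a M : ℝ} {n : ℕ} (hM : ∀ x, |F' x| ≤ M * |x - a| ^ n) (x : ℝ) :
    |F x - F a| ≤ M * |x - a| ^ (n + 1) := by
  have hM₀ : 0 ≤ M := by simpa using (abs_nonneg _).trans (hM (a + 1))
  have hmvt := (convex_uIcc a x).norm_image_sub_le_of_norm_hasDerivWithin_le
    (fun y _ => (hF y).hasDerivWithinAt)
    (C := M * |x - a| ^ n) (fun y hy => (hM y).trans
      (mul_le_mul_of_nonneg_left (pow_le_pow_left₀ (abs_nonneg _)
        (Set.abs_sub_left_of_mem_uIcc hy) n) hM₀))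
    Set.left_mem_uIcc Set.right_mem_uIcc
  simpa only [Real.norm_eq_abs, pow_succ, mul_assoc] using hmvt

theorem abs_sub_taylor_two_le {f f' f'' f''' : ℝ → ℝ} (h₁ : ∀ x, HasDerivAt f (f' x) x)
    (h₂ : ∀ x, HasDerivAt f' (f'' x) x) (h₃ : ∀ x, HasDerivAt f'' (f''' x) x) {M : ℝ}
    (hM : ∀ x, |f''' x| ≤ M) (a x : ℝ) :
    |f x - (f a + f' a * (x - a) + f'' a / 2 * (x - a) ^ 2)| ≤ M * |x - a| ^ 3 := by
  have hf'' (y : ℝ) : |f'' y - f'' a| ≤ M * |y - a| ^ 1 :=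
    abs_sub_le_mul_abs_sub_pow_succ h₃ (n := 0) (by simpa using hM) y
  have hf' (y : ℝ) : |f' y - f'' a * (y - a) - f' a| ≤ M * |y - a| ^ 2 := by
    have hd (z : ℝ) : HasDerivAt (fun y => f' y - f'' a * (y - a)) (f'' z - f'' a) z :=
      ((h₂ z).sub (((hasDerivAt_id z).sub_const a).const_mul (f'' a))).congr_deriv (by ring)
    simpa using abs_sub_le_mul_abs_sub_pow_succ hd hf'' y
  have hd (z : ℝ) : HasDerivAt (fun y => f y - (f' a * (y - a) + f'' a / 2 * (y - a) ^ 2))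
      (f' z - f'' a * (z - a) - f' a) z := by
    have hq := (((hasDerivAt_id z).sub_const a).const_mul (f' a)).add
      ((((hasDerivAt_id z).sub_const a).pow 2).const_mul (f'' a / 2))
    exact ((h₁ z).sub hq).congr_deriv (by simp only [id_eq]; ring)
  convert abs_sub_le_mul_abs_sub_pow_succ hd hf' x using 2
  ring

namespace Real

theorem hasDerivAt_sigmoid_mul_one_sub (x : ℝ) :
    HasDerivAt (fun x => sigmoid x * (1 - sigmoid x))
      (sigmoid x * (1 - sigmoid x) * (1 - 2 * sigmoid x)) x :=
  ((hasDerivAt_sigmoid x).mul ((hasDerivAt_sigmoid x).const_sub 1)).congr_deriv (by ring)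

theorem hasDerivAt_sigmoid_mul_one_sub_mul_one_sub_two_mul (x : ℝ) :
    HasDerivAt (fun x => sigmoid x * (1 - sigmoid x) * (1 - 2 * sigmoid x))
      (sigmoid x * (1 - sigmoid x) * (1 - 6 * sigmoid x * (1 - sigmoid x))) x :=
  ((hasDerivAt_sigmoid_mul_one_sub x).mul
    (((hasDerivAt_sigmoid x).const_mul 2).const_sub 1)).congr_deriv (by ring)

theorem abs_sigmoid_third_deriv_le (x : ℝ) :
    |sigmoid x * (1 - sigmoid x) * (1 - 6 * sigmoid x * (1 - sigmoid x))| ≤ 1 / 8 := by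
  have h₀ := sigmoid_pos x
  have h₁ := sigmoid_lt_one x
  set u := sigmoid x * (1 - sigmoid x)
  have hu₀ : 0 < u := mul_pos h₀ (by linarith)
  have hu₁ : u ≤ 1 / 4 := by nlinarith [sq_nonneg (sigmoid x - 1 / 2)]
  rw [abs_le]
  constructor <;> nlinarith [mul_nonneg (sub_nonneg.2 hu₁) hu₀.le]

theorem exp_div_one_add_exp (x : ℝ) : exp x / (1 + exp x) = sigmoid x := by
  rw [sigmoid_def, exp_neg]
  field_simp
  ring

theorem inv_one_add_exp_eq_sigmoid_neg (x : ℝ) : (1 + exp x)⁻¹ = sigmoid (-x) := by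
  rw [sigmoid_def, neg_neg]

end Real

theorem abs_add_pow_three_le (μ z : ℝ) : |μ + z| ^ 3 ≤ 4 * (|μ| ^ 3 + 1 + z ^ 4) := by
  have hsum : |μ + z| ^ 3 ≤ 4 * (|μ| ^ 3 + |z| ^ 3) :=
    (pow_le_pow_left₀ (abs_nonneg _) (abs_add_le μ z) 3).trans
      ((add_pow_le (abs_nonneg μ) (abs_nonneg z) 3).trans_eq (by norm_num))
  have hz : |z| ^ 3 ≤ 1 + z ^ 4 := by
    rw [← (by decide : Even 4).pow_abs z]
    nlinarith [sq_nonneg (|z| ^ 2 - |z|), sq_nonneg (|z| - 1), abs_nonneg z]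
  linarith

section Expectation

variable {Ω : Type*} [MeasurableSpace Ω] {P : Measure Ω} [IsProbabilityMeasure P] {Z : Ω → ℝ}

theorem abs_integral_comp_sub_taylor_two_le {f f' f'' f''' : ℝ → ℝ}
    (h₁ : ∀ x, HasDerivAt f (f' x) x) (h₂ : ∀ x, HasDerivAt f' (f'' x) x)
    (h₃ : ∀ x, HasDerivAt f'' (f''' x) x) {M : ℝ} (hM : ∀ x, |f''' x| ≤ M)
    {W : Ω → ℝ} (hW : MemLp W 3 P) (a t : ℝ) :
    |∫ ω, f (a + t * W ω) ∂P
        - (f a + f' a * t * ∫ ω, W ω ∂P + f'' a / 2 * t ^ 2 * ∫ ω, W ω ^ 2 ∂P)|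
      ≤ M * |t| ^ 3 * ∫ ω, |W ω| ^ 3 ∂P := by
  have hW₁ : Integrable W P := hW.integrable (by norm_num)
  have hW₂ : Integrable (fun ω => W ω ^ 2) P := (hW.mono_exponent (by norm_num)).integrable_sq
  have hW₃ : Integrable (fun ω => |W ω| ^ 3) P := by
    simpa using hW.integrable_norm_pow (by norm_num)
  set T : Ω → ℝ := fun ω => f a + f' a * t * W ω + f'' a / 2 * t ^ 2 * W ω ^ 2
  have hT : Integrable T P := by fun_prop
  have hfT (ω : Ω) : ‖f (a + t * W ω) - T ω‖ ≤ M * |t| ^ 3 * |W ω| ^ 3 := by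
    calc ‖f (a + t * W ω) - T ω‖ = |f (a + t * W ω) - (f a + f' a * (a + t * W ω - a)
          + f'' a / 2 * (a + t * W ω - a) ^ 2)| := by
          rw [Real.norm_eq_abs, add_sub_cancel_left]; congr 2; ring
      _ ≤ M * |a + t * W ω - a| ^ 3 := abs_sub_taylor_two_le h₁ h₂ h₃ hM a _
      _ = M * |t| ^ 3 * |W ω| ^ 3 := by rw [add_sub_cancel_left, abs_mul, mul_pow, mul_assoc]
  have hf : Integrable (fun ω => f (a + t * W ω)) P := by
    have hfc : Continuous f := continuous_iff_continuousAt.2 fun x => (h₁ x).continuousAt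
    refine (hT.norm.add (hW₃.const_mul (M * |t| ^ 3))).mono' (by fun_prop)
      (ae_of_all _ fun ω => ?_)
    calc ‖f (a + t * W ω)‖ ≤ ‖T ω‖ + ‖f (a + t * W ω) - T ω‖ := norm_le_insert' _ _
      _ ≤ ‖T ω‖ + M * |t| ^ 3 * |W ω| ^ 3 := by gcongr; exact hfT ω
  have hIT : ∫ ω, T ω ∂P
      = f a + f' a * t * ∫ ω, W ω ∂P + f'' a / 2 * t ^ 2 * ∫ ω, W ω ^ 2 ∂P := by
    simp only [T]
    rw [integral_add (by fun_prop) (by fun_prop), integral_add (by fun_prop) (by fun_prop),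
      integral_const, integral_const_mul, integral_const_mul]
    simp
  rw [← hIT, ← integral_sub hf hT, ← integral_const_mul, ← Real.norm_eq_abs]
  exact norm_integral_le_of_norm_le (hW₃.const_mul _) (ae_of_all _ hfT)

theorem integral_const_add_of_integral_eq_zero (hZ : Integrable Z P) (hmean : ∫ ω, Z ω ∂P = 0)
    (μ : ℝ) : ∫ ω, (μ + Z ω) ∂P = μ := by
  simp [integral_add (integrable_const μ) hZ, hmean]

theorem integral_const_add_sq_of_integral_eq_zero (hZ : MemLp Z 2 P) (hmean : ∫ ω, Z ω ∂P = 0)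
    (μ : ℝ) : ∫ ω, (μ + Z ω) ^ 2 ∂P = μ ^ 2 + ∫ ω, Z ω ^ 2 ∂P := by
  have hZ₁ := hZ.integrable one_le_two
  have hZ₂ := hZ.integrable_sq
  calc ∫ ω, (μ + Z ω) ^ 2 ∂P = ∫ ω, (μ ^ 2 + (2 * μ * Z ω + Z ω ^ 2)) ∂P := by
        congr 1; ext ω; ring
    _ = μ ^ 2 + ∫ ω, Z ω ^ 2 ∂P := by
        rw [integral_add (integrable_const _) (by fun_prop), integral_add (by fun_prop) hZ₂,
          integral_const_mul, hmean]
        simp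

theorem integral_abs_const_add_pow_three_le (hZ : Integrable (fun ω => Z ω ^ 4) P) (μ : ℝ) :
    ∫ ω, |μ + Z ω| ^ 3 ∂P ≤ 4 * (|μ| ^ 3 + 1 + ∫ ω, Z ω ^ 4 ∂P) := by
  calc ∫ ω, |μ + Z ω| ^ 3 ∂P ≤ ∫ ω, 4 * (|μ| ^ 3 + 1 + Z ω ^ 4) ∂P :=
        integral_mono_of_nonneg (ae_of_all _ fun ω => by positivity)
          (((integrable_const _).add hZ).const_mul 4)
          (ae_of_all _ fun ω => abs_add_pow_three_le μ (Z ω))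
    _ = 4 * (|μ| ^ 3 + 1 + ∫ ω, Z ω ^ 4 ∂P) := by
        rw [integral_const_mul, integral_add (integrable_const _) hZ]
        simp

end Expectation

/-- Third-order expansion (6.3) of the expected logistic probability around
`β = 0`, uniform over bounded `α` and `μ`: with `ρ = e^α/(1 + e^α)`,
`|E[(1 + exp(α + β(μ + Z)))⁻¹] − (1 − ρ)·{1 − ρβμ + ρ(ρ − ½)β²(μ² + E Z²)}| ≤ K|β|³`. -/
theorem expected_logistic_third_order_expansion
    {Ω : Type*} [MeasurableSpace Ω] (P : Measure Ω) [IsProbabilityMeasure P]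
    (Z : Ω → ℝ) (hZmeas : Measurable Z)
    (hZmom : Integrable (fun ω => (Z ω) ^ 4) P)
    (hZmean : ∫ ω, Z ω ∂P = 0) :
    ∀ C : ℝ, 0 < C →
      ∃ K : ℝ, 0 < K ∧ ∃ β₀ ∈ Set.Ioc (0 : ℝ) 1,
        ∀ α μ β : ℝ, |α| ≤ C → |μ| ≤ C → |β| ≤ β₀ →
          |(∫ ω, (1 + Real.exp (α + β * (μ + Z ω)))⁻¹ ∂P)
              - (1 - Real.exp α / (1 + Real.exp α))
                * (1 - (Real.exp α / (1 + Real.exp α)) * β * μ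
                    + (Real.exp α / (1 + Real.exp α))
                      * (Real.exp α / (1 + Real.exp α) - 1 / 2)
                      * β ^ 2 * (μ ^ 2 + ∫ ω, (Z ω) ^ 2 ∂P))|
            ≤ K * |β| ^ 3 := by
  intro C hC
  have hZ₄ : MemLp Z 4 P := by
    refine (integrable_norm_rpow_iff hZmeas.aestronglyMeasurable (p := 4) (by norm_num)
      (by norm_num)).1 ?_
    simpa [Real.norm_eq_abs, (by decide : Even 4).pow_abs] using hZmom
  have hK : 0 < (C ^ 3 + 1 + ∫ ω, Z ω ^ 4 ∂P) / 2 := by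
    have : 0 ≤ ∫ ω, Z ω ^ 4 ∂P := integral_nonneg fun ω => by positivity
    positivity
  refine ⟨_, hK, 1, ⟨one_pos, le_rfl⟩, fun α μ β _ hμ _ => ?_⟩
  have hW : MemLp (fun ω => μ + Z ω) 3 P := ((memLp_const μ).add hZ₄).mono_exponent (by norm_num)
  have h := abs_integral_comp_sub_taylor_two_le hasDerivAt_sigmoid hasDerivAt_sigmoid_mul_one_sub
    hasDerivAt_sigmoid_mul_one_sub_mul_one_sub_two_mul abs_sigmoid_third_deriv_le hW (-α) (-β)
  rw [integral_const_add_of_integral_eq_zero (hZ₄.integrable (by norm_num)) hZmean,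
    integral_const_add_sq_of_integral_eq_zero (hZ₄.mono_exponent (by norm_num)) hZmean,
    sigmoid_neg α, abs_neg] at h
  simp only [neg_mul, ← neg_add] at h
  have hμ₃ : |μ| ^ 3 ≤ C ^ 3 := pow_le_pow_left₀ (abs_nonneg μ) hμ 3
  have hm := integral_abs_const_add_pow_three_le hZmom μ
  simp only [inv_one_add_exp_eq_sigmoid_neg, exp_div_one_add_exp]
  refine (le_of_eq ?_).trans (h.trans ?_)
  · congr 2
    ring
  · nlinarith [pow_nonneg (abs_nonneg β) 3]
end
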